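/- arXiv:2210.07464 — 4 statements merged into one kernel-verified Lean document; each statement's English description precedes it below -/
import Mathlib

section
/- There exists an absolute constant C > 0 such that for all integers l ≥ 1 and d > 2, one has ∑_{1 ≤ h < d/2} cos^l(πh/d) ≤ C·d/√l, where the sum runs over integers h with 1 ≤ h < d/2. -/
open Real Finset

theorem statement4 :
    ∃ C : ℝ, 0 < C ∧ ∀ l : ℕ, 1 ≤ l → ∀ d : ℕ, 2 < d →
      ∑ h ∈ (Finset.Ico 1 d).filter (fun h => 2 * h < d),
          Real.cos (Real.pi * h / d) ^ l
        ≤ C * d / Real.sqrt l := by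
  refine ⟨2, by norm_num, fun l hl d hd => ?_⟩
  have hd0 : (0:ℝ) < d := by positivity
  have hl0 : (0:ℝ) < l := by exact_mod_cast hl
  have hsl : (0:ℝ) < Real.sqrt l := Real.sqrt_pos.2 hl0
  set s : ℝ := Real.sqrt l / d with hsdef
  have hs0 : 0 < s := by positivity
  have hs2 : s ^ 2 = l / d ^ 2 := by
    rw [hsdef, div_pow, Real.sq_sqrt hl0.le]
  set S := (Finset.Ico 1 d).filter (fun h => 2 * h < d) with hS
  -- termwise bound
  have hterm : ∀ h ∈ S, Real.cos (Real.pi * h / d) ^ l ≤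
      (if s * h ≤ 1 then (1:ℝ) else 0) + Real.exp (-s) ^ h := by
    intro h hh
    simp only [hS, Finset.mem_filter, Finset.mem_Ico] at hh
    obtain ⟨⟨h1, h2⟩, h3⟩ := hh
    have hh0 : (1:ℝ) ≤ h := by exact_mod_cast h1
    have hx0 : (0:ℝ) < Real.pi * h / d := by positivity
    have hxpi : Real.pi * h / d ≤ Real.pi := by
      rw [div_le_iff₀ hd0]
      have : (h:ℝ) ≤ d := by exact_mod_cast (le_of_lt h2)
      nlinarith [Real.pi_pos]
    have hcos : Real.cos (Real.pi * h / d) ≤ Real.exp (-(2 * h ^ 2 / d ^ 2)) := by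
      have h1' := Real.cos_le_one_sub_mul_cos_sq (x := Real.pi * h / d)
        (by rw [abs_of_nonneg hx0.le]; exact hxpi)
      have h2' : 1 - 2 * (h:ℝ) ^ 2 / d ^ 2 ≤ Real.exp (-(2 * h ^ 2 / d ^ 2)) := by
        linarith [Real.add_one_le_exp (-(2 * (h:ℝ) ^ 2 / d ^ 2))]
      have h3' : 2 / Real.pi ^ 2 * (Real.pi * h / d) ^ 2 = 2 * (h:ℝ) ^ 2 / d ^ 2 := by
        field_simp
      linarith
    have hcosnn : 0 ≤ Real.cos (Real.pi * h / d) := by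
      apply Real.cos_nonneg_of_mem_Icc
      constructor
      · linarith [hx0.le, Real.pi_pos]
      · rw [div_le_div_iff₀ hd0 (by norm_num : (0:ℝ) < 2)]
        have : 2 * (h:ℝ) ≤ d := by exact_mod_cast (le_of_lt h3)
        nlinarith [Real.pi_pos]
    have hp : Real.cos (Real.pi * h / d) ^ l ≤ Real.exp (-(2 * (s * h) ^ 2)) := by
      calc Real.cos (Real.pi * h / d) ^ l ≤ Real.exp (-(2 * h ^ 2 / d ^ 2)) ^ l :=
            pow_le_pow_left₀ hcosnn hcos l
        _ = Real.exp (-(2 * (s * h) ^ 2)) := by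
            rw [← Real.exp_nat_mul, mul_pow, hs2]
            congr 1
            field_simp
    by_cases hc : s * h ≤ 1
    · simp only [hc, if_true]
      have h4 : Real.exp (-(2 * (s * h) ^ 2)) ≤ 1 := by
        rw [Real.exp_le_one_iff, neg_nonpos]
        positivity
      have hge : (0:ℝ) ≤ Real.exp (-s) ^ h := by positivity
      linarith
    · simp only [hc, if_false, zero_add]
      push_neg at hc
      calc Real.cos (Real.pi * h / d) ^ l ≤ Real.exp (-(2 * (s * h) ^ 2)) := hp
        _ ≤ Real.exp (-(s * h)) := by
            apply Real.exp_le_exp.2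
            rw [neg_le_neg_iff]
            nlinarith
        _ = Real.exp (-s) ^ h := by
            rw [← Real.exp_nat_mul]; ring_nf
  have hsum := Finset.sum_le_sum hterm
  rw [Finset.sum_add_distrib] at hsum
  -- bound the indicator sum
  have hsum1 : ∑ h ∈ S, (if s * h ≤ 1 then (1:ℝ) else 0) ≤ 1 / s := by
    rw [← Finset.sum_filter]
    simp only [Finset.sum_const, nsmul_eq_mul, mul_one]
    have hsub : S.filter (fun h : ℕ => s * (h:ℝ) ≤ 1) ⊆ Finset.Icc 1 ⌊1/s⌋₊ := by
      intro h hh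
      simp only [Finset.mem_filter, hS, Finset.mem_Ico, Finset.mem_Icc] at hh ⊢
      obtain ⟨⟨⟨h1, _⟩, _⟩, hc⟩ := hh
      refine ⟨h1, Nat.le_floor ?_⟩
      rw [le_div_iff₀ hs0]
      linarith [mul_comm s (h:ℝ)]
    calc ((S.filter (fun h : ℕ => s * (h:ℝ) ≤ 1)).card : ℝ) ≤ ((Finset.Icc 1 ⌊1/s⌋₊).card : ℝ) := by
          exact_mod_cast Finset.card_le_card hsub
      _ = (⌊1/s⌋₊ : ℝ) := by rw [Nat.card_Icc]; simp
      _ ≤ 1 / s := Nat.floor_le (by positivity)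
  -- bound the geometric sum
  have hr1 : Real.exp (-s) < 1 := by
    rw [Real.exp_lt_one_iff]; linarith
  have hsum2 : ∑ h ∈ S, Real.exp (-s) ^ h ≤ 1 / s := by
    have hmono : ∑ h ∈ S, Real.exp (-s) ^ h ≤ ∑ h ∈ Finset.Ico 1 d, Real.exp (-s) ^ h :=
      Finset.sum_le_sum_of_subset_of_nonneg (Finset.filter_subset _ _)
        (fun i _ _ => by positivity)
    have hgeo : ∑ h ∈ Finset.Ico 1 d, Real.exp (-s) ^ h ≤ Real.exp (-s) / (1 - Real.exp (-s)) := by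
      rw [geom_sum_Ico' hr1.ne (by omega)]
      rw [div_le_div_iff₀ (by linarith) (by linarith)]
      have : (0:ℝ) ≤ Real.exp (-s) ^ d := by positivity
      nlinarith
    have hfin : Real.exp (-s) / (1 - Real.exp (-s)) ≤ 1 / s := by
      rw [div_le_div_iff₀ (by linarith) hs0]
      have := Real.add_one_le_exp s
      have he : Real.exp (-s) * Real.exp s = 1 := by
        rw [← Real.exp_add]; simp
      nlinarith [Real.exp_pos (-s), Real.exp_pos s]
    linarith
  have hfinal : (1:ℝ)/s + 1/s = 2 * d / Real.sqrt l := by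
    rw [hsdef]
    field_simp
    ring
  linarith
end

section
/- Fix a real number δ with 0 < δ ≤ 1/2. There exists a constant C > 0 depending only on δ such that for all integers d > 1 and all integers n ≥ 2, one has (1/d) ∑_{h=1}^{d−1} (1 − δ + δ·cos(2πh/d))^{n/2} ≤ C·(log n)/√n, where the base 1 − δ + δ·cos(2πh/d) is a nonnegative real number and the exponent n/2 denotes a real power. -/
/-!
Since `cos (2πx) ≤ 1 - 8x²` on `[0, 1/2]` and `1 + y ≤ exp y`, each base satisfies
`1 - δ + δ cos (2πh/d) ≤ exp (-8δ m²/d²)` with `m = min h (d - h)`. Raised to the power `n/2`,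
the sum is at most twice the Gaussian sum `∑_{h ≥ 1} exp (-(4δn/d²) h²)`, which comparison with
the half-line Gaussian integral bounds by `d √π / (4 √(δn))`. So the average is `O(1/√n)`.
-/

open Finset Real

lemma sum_Ico_one_exp_neg_mul_sq_le {b : ℝ} (hb : 0 < b) (N : ℕ) :
    ∑ h ∈ Ico 1 N, exp (-b * (h : ℝ) ^ 2) ≤ √(π / b) / 2 := by
  have anti : AntitoneOn (fun x : ℝ ↦ exp (-b * x ^ 2)) (Set.Ici 0) := by
    intro x hx y _ hxy
    simp only [exp_le_exp, neg_mul, neg_le_neg_iff]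
    gcongr
  rw [← integral_gaussian_Ioi, sum_Ico_eq_sum_range]
  convert (anti.mono Set.Icc_subset_Ici_self).sum_range_le_integral
    (integrable_exp_neg_mul_sq hb).integrableOn (fun _ _ ↦ (exp_pos _).le) using 4
  push_cast
  ring

lemma cos_two_pi_mul_le {x : ℝ} (hx0 : 0 ≤ x) (hx1 : x ≤ 1 / 2) :
    cos (2 * π * x) ≤ 1 - 8 * x ^ 2 := by
  have h := cos_le_one_sub_mul_cos_sq (x := 2 * π * x) (by
    rw [abs_of_nonneg (by positivity)]
    nlinarith [pi_pos])
  convert h using 2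
  field_simp
  ring

lemma one_sub_add_mul_cos_rpow_le {δ t x : ℝ} (hδ0 : 0 ≤ δ) (hδ : δ ≤ 1 / 2)
    (ht : 0 ≤ t) (hx0 : 0 ≤ x) (hx1 : x ≤ 1 / 2) :
    (1 - δ + δ * cos (2 * π * x)) ^ t ≤ exp (-(8 * δ * t) * x ^ 2) := by
  have base_nonneg : 0 ≤ 1 - δ + δ * cos (2 * π * x) := by
    nlinarith [neg_one_le_cos (2 * π * x)]
  have base_le : 1 - δ + δ * cos (2 * π * x) ≤ exp (-(8 * δ) * x ^ 2) := by
    nlinarith [cos_two_pi_mul_le hx0 hx1, add_one_le_exp (-(8 * δ) * x ^ 2)]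
  calc (1 - δ + δ * cos (2 * π * x)) ^ t ≤ exp (-(8 * δ) * x ^ 2) ^ t :=
        rpow_le_rpow base_nonneg base_le ht
    _ = exp (-(8 * δ * t) * x ^ 2) := by rw [← exp_mul]; ring_nf

lemma one_sub_add_mul_cos_rpow_le_add {δ t x : ℝ} (hδ0 : 0 ≤ δ) (hδ : δ ≤ 1 / 2)
    (ht : 0 ≤ t) (hx0 : 0 ≤ x) (hx1 : x ≤ 1) :
    (1 - δ + δ * cos (2 * π * x)) ^ t
      ≤ exp (-(8 * δ * t) * x ^ 2) + exp (-(8 * δ * t) * (1 - x) ^ 2) := by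
  rcases le_total x (1 / 2) with hx | hx
  · exact (one_sub_add_mul_cos_rpow_le hδ0 hδ ht hx0 hx).trans
      (le_add_of_nonneg_right (exp_pos _).le)
  · have hcos : cos (2 * π * x) = cos (2 * π * (1 - x)) := by
      rw [show 2 * π * (1 - x) = 2 * π - 2 * π * x by ring, cos_two_pi_sub]
    rw [hcos]
    exact (one_sub_add_mul_cos_rpow_le hδ0 hδ ht (by linarith) (by linarith)).trans
      (le_add_of_nonneg_left (exp_pos _).le)

lemma sum_Ico_one_sub_add_mul_cos_rpow_le {δ t : ℝ} (hδ0 : 0 ≤ δ) (hδ : δ ≤ 1 / 2)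
    (ht : 0 ≤ t) {d : ℕ} (hd : 0 < d) :
    ∑ h ∈ Ico 1 d, (1 - δ + δ * cos (2 * π * h / d)) ^ t
      ≤ 2 * ∑ h ∈ Ico 1 d, exp (-(8 * δ * t / d ^ 2) * (h : ℝ) ^ 2) := by
  set g : ℕ → ℝ := fun h ↦ exp (-(8 * δ * t / d ^ 2) * (h : ℝ) ^ 2)
  have hd' : (0 : ℝ) < d := by exact_mod_cast hd
  have term_le :
      ∀ h ∈ Ico 1 d, (1 - δ + δ * cos (2 * π * h / d)) ^ t ≤ g h + g (d - h) := by
    intro h hh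
    have hhd : h ≤ d := (mem_Ico.1 hh).2.le
    have key := one_sub_add_mul_cos_rpow_le_add (x := h / d) hδ0 hδ ht (by positivity)
      (div_le_one_of_le₀ (by exact_mod_cast hhd) hd'.le)
    have hx : -(8 * δ * t) * ((h : ℝ) / d) ^ 2 = -(8 * δ * t / d ^ 2) * (h : ℝ) ^ 2 := by
      field_simp
    have hy :
        -(8 * δ * t) * (1 - (h : ℝ) / d) ^ 2 = -(8 * δ * t / d ^ 2) * ((d : ℝ) - h) ^ 2 := by
      field_simp
    rw [hx, hy, ← mul_div_assoc] at key
    simpa only [g, Nat.cast_sub hhd] using key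
  have reflect : ∑ h ∈ Ico 1 d, g (d - h) = ∑ h ∈ Ico 1 d, g h := by
    rw [sum_Ico_reflect g 1 (Nat.le_succ d)]
    simp
  calc _ ≤ ∑ h ∈ Ico 1 d, (g h + g (d - h)) := sum_le_sum term_le
    _ = 2 * ∑ h ∈ Ico 1 d, g h := by rw [sum_add_distrib, reflect, two_mul]

lemma average_one_sub_add_mul_cos_rpow_le {δ t : ℝ} (hδ0 : 0 < δ) (hδ : δ ≤ 1 / 2)
    (ht : 0 < t) {d : ℕ} (hd : 0 < d) :
    (1 / (d : ℝ)) * ∑ h ∈ Ico 1 d, (1 - δ + δ * cos (2 * π * h / d)) ^ t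
      ≤ √(π / (8 * δ * t)) := by
  have hd' : (0 : ℝ) < d := by exact_mod_cast hd
  have gauss := sum_Ico_one_exp_neg_mul_sq_le (b := 8 * δ * t / d ^ 2) (by positivity) d
  have hsqrt : √(π / (8 * δ * t / d ^ 2)) = d * √(π / (8 * δ * t)) := by
    rw [div_div_eq_mul_div, mul_comm, mul_div_assoc, sqrt_mul (by positivity), sqrt_sq hd'.le]
  calc _ ≤ (1 / (d : ℝ)) * (2 * (√(π / (8 * δ * t / d ^ 2)) / 2)) := by
        gcongr
        exact (sum_Ico_one_sub_add_mul_cos_rpow_le hδ0.le hδ ht.le hd).trans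
          (mul_le_mul_of_nonneg_left gauss two_pos.le)
    _ = √(π / (8 * δ * t)) := by rw [hsqrt]; field_simp

theorem statement5 (δ : ℝ) (hδ0 : 0 < δ) (hδ : δ ≤ 1 / 2) :
    ∃ C : ℝ, 0 < C ∧ ∀ d : ℕ, 1 < d → ∀ n : ℕ, 2 ≤ n →
      (1 / (d : ℝ)) * ∑ h ∈ Finset.Ico 1 d,
          (1 - δ + δ * Real.cos (2 * Real.pi * h / d)) ^ ((n : ℝ) / 2)
        ≤ C * Real.log n / Real.sqrt n := by
  have hlog2 : 0 < log 2 := log_pos one_lt_two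
  refine ⟨√(π / (4 * δ)) / log 2, by positivity, fun d hd n hn ↦ ?_⟩
  have hn' : (2 : ℝ) ≤ n := by exact_mod_cast hn
  have hlog : log 2 ≤ log n := log_le_log two_pos hn'
  calc _ ≤ √(π / (8 * δ * (n / 2))) :=
        average_one_sub_add_mul_cos_rpow_le hδ0 hδ (by positivity) (by omega)
    _ = √(π / (4 * δ)) / √n := by
        rw [← sqrt_div' _ (by positivity)]
        congr 1
        field_simp
        ring
    _ ≤ √(π / (4 * δ)) / log 2 * log n / √n := by
        gcongr
        rw [div_mul_eq_mul_div, le_div_iff₀ hlog2]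
        exact mul_le_mul_of_nonneg_left hlog (sqrt_nonneg _)
end

section
/- Let l ≥ 2 and 1 ≤ i ≤ l − 1 be integers, and let β_{t_1}, …, β_{t_i}, η_i be real numbers with 0 < β_{t_1}, …, β_{t_i}, η_i < 1 and η_i = 1 − (β_{t_1} + ⋯ + β_{t_i}). There exists a constant C > 0, depending only on (β_{t_1}, …, β_{t_i}, η_i), such that for all integers d > 1 and all integers n ≥ 2, one has (1/d^{l−1}) ∑_{h_{t_1}=1}^{d−1} ⋯ ∑_{h_{t_i}=1}^{d−1} |β_{t_1} e(h_{t_1}/d) + ⋯ + β_{t_i} e(h_{t_i}/d) + η_i|^n ≤ C·(log n)/√n. -/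
/-!
Isolating one coordinate `a₀` and applying the triangle inequality to the others gives
`|∑ β_a e(h_a/d) + η| ≤ 1 - c (1 - cos (2π h_{a₀}/d))` with `c = β_{a₀} η / (β_{a₀} + η)`, so the
`n`-th power is at most `exp (-n c (1 - cos (2π h_{a₀}/d)))`. The other coordinates contribute a
factor `(d - 1)^(i - 1)`, and since `1 - cos (2π x) ≥ 8 min(x, 1 - x)²`, the sum over `h_{a₀}` is at
most twice the Gaussian sum `∑ exp (-8 n c k² / d²) ≤ (d / 2) √(π / (8 n c))` (compare with the
Gaussian integral). So the normalized sum is `O(1/√n)`, which is stronger than the claimed bound.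
-/

open Real Finset MeasureTheory

theorem norm_mul_exp_add_le {b e : ℝ} (hb : 0 < b) (he : 0 < e) (θ : ℝ) :
    ‖(b : ℂ) * Complex.exp (θ * Complex.I) + e‖ ≤ b + e - b * e / (b + e) * (1 - cos θ) := by
  have hsq : ‖(b : ℂ) * Complex.exp (θ * Complex.I) + e‖ ^ 2 =
      (b + e) ^ 2 - 2 * b * e * (1 - cos θ) := by
    rw [Complex.sq_norm, Complex.normSq_apply]
    simp only [Complex.add_re, Complex.add_im, Complex.mul_re, Complex.mul_im,
      Complex.exp_ofReal_mul_I_re, Complex.exp_ofReal_mul_I_im, Complex.ofReal_re,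
      Complex.ofReal_im]
    linear_combination b ^ 2 * sin_sq_add_cos_sq θ
  set s := b * e / (b + e) * (1 - cos θ) with hs_def
  have hs : s * (b + e) = b * e * (1 - cos θ) := by rw [hs_def]; field_simp
  have hrhs : 0 ≤ b + e - s := by
    have : b * e * (1 - cos θ) ≤ (b + e) * (b + e) := by
      nlinarith [neg_one_le_cos θ, mul_pos hb he, sq_nonneg (b - e)]
    nlinarith
  -- the squared norm is `(b + e)² - 2 s (b + e) ≤ (b + e - s)²`
  refine le_of_sq_le_sq ?_ hrhs
  nlinarith [sq_nonneg s]

theorem norm_sum_mul_exp_add_le {ι : Type*} [Fintype ι] {β : ι → ℝ} (hβ : ∀ a, 0 ≤ β a)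
    {η : ℝ} (hη : 0 < η) (θ : ι → ℝ) {a₀ : ι} (ha₀ : 0 < β a₀) :
    ‖∑ a, (β a : ℂ) * Complex.exp (θ a * Complex.I) + η‖ ≤
      ∑ a, β a + η - β a₀ * η / (β a₀ + η) * (1 - cos (θ a₀)) := by
  classical
  rw [← add_sum_erase _ _ (mem_univ a₀), ← add_sum_erase _ _ (mem_univ a₀), add_right_comm]
  have hrest : ‖∑ a ∈ univ.erase a₀, (β a : ℂ) * Complex.exp (θ a * Complex.I)‖ ≤
      ∑ a ∈ univ.erase a₀, β a := by
    refine (norm_sum_le _ _).trans (sum_le_sum fun a _ => ?_)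
    rw [norm_mul, Complex.norm_exp_ofReal_mul_I, Complex.norm_real, norm_of_nonneg (hβ a), mul_one]
  linarith [norm_add_le ((β a₀ : ℂ) * Complex.exp (θ a₀ * Complex.I) + η)
    (∑ a ∈ univ.erase a₀, (β a : ℂ) * Complex.exp (θ a * Complex.I)),
    norm_mul_exp_add_le ha₀ hη (θ a₀)]

theorem sum_Ico_exp_neg_mul_sq_le {A : ℝ} (hA : 0 < A) (d : ℕ) :
    ∑ k ∈ Ico 1 d, exp (-A * k ^ 2) ≤ √(π / A) / 2 := by
  set f : ℝ → ℝ := fun x => exp (-A * x ^ 2)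
  have hanti : AntitoneOn f (Set.Ici 0) := fun x hx y _ hxy => by
    simp only [f, exp_le_exp, neg_mul, neg_le_neg_iff]
    gcongr
  calc ∑ k ∈ Ico 1 d, f k = ∑ k ∈ range (d - 1), f (0 + ↑(k + 1)) := by
        rw [sum_Ico_eq_sum_range]; simp [add_comm]
    _ ≤ ∫ x in (0 : ℝ)..0 + ↑(d - 1), f x :=
        AntitoneOn.sum_le_integral (hanti.mono Set.Icc_subset_Ici_self)
    _ ≤ ∫ x in Set.Ioi 0, f x := by
        rw [intervalIntegral.integral_of_le (by positivity)]
        exact setIntegral_mono_set (integrable_exp_neg_mul_sq hA).integrableOn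
          (Filter.Eventually.of_forall fun x => (exp_pos _).le)
          Set.Ioc_subset_Ioi_self.eventuallyLE
    _ = √(π / A) / 2 := integral_gaussian_Ioi A

theorem exp_neg_mul_one_sub_cos_le {m x : ℝ} (hm : 0 ≤ m) (hx0 : 0 ≤ x) (hx1 : x ≤ 1) :
    exp (-m * (1 - cos (2 * π * x))) ≤ exp (-(8 * m) * x ^ 2) + exp (-(8 * m) * (1 - x) ^ 2) := by
  wlog hx : x ≤ 1 / 2 generalizing x
  · have := this (x := 1 - x) (by linarith) (by linarith) (by linarith)
    rwa [show 2 * π * (1 - x) = 2 * π - 2 * π * x by ring, cos_two_pi_sub, sub_sub_cancel,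
      add_comm] at this
  have hcos := cos_le_one_sub_mul_cos_sq (x := 2 * π * x) (by
    rw [abs_of_nonneg (by positivity)]; nlinarith [pi_pos])
  have hquad : 2 / π ^ 2 * (2 * π * x) ^ 2 = 8 * x ^ 2 := by field_simp; ring
  have : exp (-m * (1 - cos (2 * π * x))) ≤ exp (-(8 * m) * x ^ 2) :=
    exp_le_exp.2 (by nlinarith)
  linarith [exp_pos (-(8 * m) * (1 - x) ^ 2)]

theorem sum_Ico_exp_neg_mul_one_sub_cos_le {m : ℝ} (hm : 0 < m) (d : ℕ) :
    ∑ k ∈ Ico 1 d, exp (-m * (1 - cos (2 * π * k / d))) ≤ d * √(π / (8 * m)) := by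
  rcases Nat.eq_zero_or_pos d with rfl | hd
  · simp
  have hd0 : (0 : ℝ) < d := by exact_mod_cast hd
  set A := 8 * m / d ^ 2 with hA
  have hreflect : ∑ k ∈ Ico 1 d, exp (-A * ((d - k : ℕ) : ℝ) ^ 2) =
      ∑ k ∈ Ico 1 d, exp (-A * k ^ 2) :=
    (sum_Ico_reflect (fun k : ℕ => exp (-A * (k : ℝ) ^ 2)) 1 (m := d) (n := d) (by omega)).trans
      (by rw [Nat.add_sub_cancel_left, Nat.add_sub_cancel])
  calc ∑ k ∈ Ico 1 d, exp (-m * (1 - cos (2 * π * k / d)))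
      ≤ ∑ k ∈ Ico 1 d, (exp (-A * k ^ 2) + exp (-A * ((d - k : ℕ) : ℝ) ^ 2)) := by
        refine sum_le_sum fun k hk => ?_
        have hkd : k ≤ d := (mem_Ico.1 hk).2.le
        have hx1 : (k : ℝ) / d ≤ 1 := div_le_one_of_le₀ (by exact_mod_cast hkd) hd0.le
        have key := exp_neg_mul_one_sub_cos_le hm.le (by positivity) hx1
        have e1 : -(8 * m) * (k / d : ℝ) ^ 2 = -A * k ^ 2 := by rw [hA]; ring
        have e2 : -(8 * m) * (1 - k / d : ℝ) ^ 2 = -A * ((d - k : ℕ) : ℝ) ^ 2 := by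
          rw [hA, Nat.cast_sub hkd]; field_simp
        rwa [← mul_div_assoc, e1, e2] at key
    _ = 2 * ∑ k ∈ Ico 1 d, exp (-A * k ^ 2) := by rw [sum_add_distrib, hreflect, two_mul]
    _ ≤ 2 * (√(π / A) / 2) := by gcongr; exact sum_Ico_exp_neg_mul_sq_le (by positivity) d
    _ = d * √(π / (8 * m)) := by
        rw [mul_div_cancel₀ _ two_ne_zero, ← sqrt_sq hd0.le, ← sqrt_mul (sq_nonneg _), hA]
        congr 1; field_simp

theorem sum_piFinset_norm_pow_le {ι : Type*} [Fintype ι] [DecidableEq ι] {β : ι → ℝ}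
    (hβ : ∀ a, 0 ≤ β a) {η : ℝ} (hη : 0 < η) (hsum : ∑ a, β a + η = 1) {a₀ : ι}
    (ha₀ : 0 < β a₀) (d : ℕ) {n : ℕ} (hn : 0 < n) :
    ∑ h ∈ Fintype.piFinset (fun _ : ι => Ico 1 d),
        ‖∑ a, (β a : ℂ) * Complex.exp (2 * π * Complex.I * (h a : ℂ) / (d : ℂ)) + (η : ℂ)‖ ^ n
      ≤ d ^ Fintype.card ι * √(π / (8 * (n * (β a₀ * η / (β a₀ + η))))) := by
  set c := β a₀ * η / (β a₀ + η)
  have hc : 0 < c := by positivity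
  have hpoint : ∀ h : ι → ℕ,
      ‖∑ a, (β a : ℂ) * Complex.exp (2 * π * Complex.I * (h a : ℂ) / (d : ℂ)) + (η : ℂ)‖ ^ n ≤
        exp (-(n * c) * (1 - cos (2 * π * h a₀ / d))) := by
    intro h
    have hθ : ∀ a, 2 * π * Complex.I * (h a : ℂ) / (d : ℂ) =
        ((2 * π * h a / d : ℝ) : ℂ) * Complex.I := fun a => by push_cast; ring
    simp only [hθ]
    have hnorm := norm_sum_mul_exp_add_le hβ hη (fun a => 2 * π * h a / d) ha₀
    rw [hsum] at hnorm
    calc _ ≤ exp (-(c * (1 - cos (2 * π * h a₀ / d)))) ^ n := by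
          gcongr
          exact hnorm.trans (by linarith [add_one_le_exp (-(c * (1 - cos (2 * π * h a₀ / d))))])
      _ = _ := by rw [← exp_nat_mul]; ring_nf
  calc _ ≤ ∑ h ∈ Fintype.piFinset (fun _ : ι => Ico 1 d),
          exp (-(n * c) * (1 - cos (2 * π * h a₀ / d))) := sum_le_sum fun h _ => hpoint h
    _ = (d - 1 : ℕ) ^ (Fintype.card ι - 1) *
          ∑ k ∈ Ico 1 d, exp (-(n * c) * (1 - cos (2 * π * k / d))) := by
          rw [Fintype.sum_piFinset_apply (fun k : ℕ => exp (-(n * c) * (1 - cos (2 * π * k / d)))),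
            nsmul_eq_mul, Nat.card_Ico, Nat.cast_pow]
    _ ≤ (d - 1 : ℕ) ^ (Fintype.card ι - 1) * (d * √(π / (8 * (n * c)))) := by
          gcongr; exact sum_Ico_exp_neg_mul_one_sub_cos_le (by positivity) d
    _ ≤ d ^ Fintype.card ι * √(π / (8 * (n * c))) := by
          rw [← mul_assoc, ← Nat.sub_add_cancel (Fintype.card_pos_iff.2 ⟨a₀⟩), pow_succ,
            Nat.add_sub_cancel]
          gcongr
          exact_mod_cast Nat.sub_le d 1

theorem statement6_general (l i : ℕ) (hi1 : 1 ≤ i) (hil : i ≤ l - 1)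
    (β : Fin i → ℝ) (η : ℝ)
    (hβ0 : ∀ a, 0 < β a)
    (hη0 : 0 < η) (hη : η = 1 - ∑ a, β a) :
    ∃ C : ℝ, 0 < C ∧ ∀ d : ℕ, 1 < d → ∀ n : ℕ, 2 ≤ n →
      (1 / (d : ℝ) ^ (l - 1)) *
          ∑ h ∈ Fintype.piFinset (fun _ : Fin i => Finset.Ico 1 d),
            ‖∑ a, (β a : ℂ) *
                Complex.exp (2 * Real.pi * Complex.I * (h a : ℂ) / (d : ℂ)) + (η : ℂ)‖ ^ n
        ≤ C * Real.log n / Real.sqrt n := by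
  set a₀ : Fin i := ⟨0, hi1⟩
  set c := β a₀ * η / (β a₀ + η)
  have hc : 0 < c := by have := hβ0 a₀; positivity
  refine ⟨√(π / (8 * c)) / log 2, by positivity, fun d hd n hn => ?_⟩
  have hn0 : (0 : ℝ) < n := by positivity
  have hlog : log 2 ≤ log n := log_le_log two_pos (by exact_mod_cast hn)
  have hbound := sum_piFinset_norm_pow_le (fun a => (hβ0 a).le) hη0 (by rw [hη]; ring) (hβ0 a₀) d
    (n := n) (by omega)
  rw [Fintype.card_fin] at hbound
  calc _ ≤ 1 / (d : ℝ) ^ (l - 1) * (d ^ i * √(π / (8 * (n * c)))) := by gcongr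
    _ ≤ √(π / (8 * (n * c))) := by
        rw [← mul_assoc, one_div_mul_eq_div]
        refine mul_le_of_le_one_left (by positivity) (div_le_one_of_le₀ ?_ (by positivity))
        exact pow_le_pow_right₀ (by exact_mod_cast hd.le) hil
    _ = √(π / (8 * c)) / log 2 * log 2 / √n := by
        rw [div_mul_cancel₀ _ (log_pos one_lt_two).ne', ← sqrt_div' _ hn0.le]
        congr 1; field_simp
    _ ≤ √(π / (8 * c)) / log 2 * log n / √n := by gcongr

theorem statement6 (l i : ℕ) (hl : 2 ≤ l) (hi1 : 1 ≤ i) (hil : i ≤ l - 1)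
    (β : Fin i → ℝ) (η : ℝ)
    (hβ0 : ∀ a, 0 < β a) (hβ1 : ∀ a, β a < 1)
    (hη0 : 0 < η) (hη1 : η < 1) (hη : η = 1 - ∑ a, β a) :
    ∃ C : ℝ, 0 < C ∧ ∀ d : ℕ, 1 < d → ∀ n : ℕ, 2 ≤ n →
      (1 / (d : ℝ) ^ (l - 1)) *
          ∑ h ∈ Fintype.piFinset (fun _ : Fin i => Finset.Ico 1 d),
            ‖∑ a, (β a : ℂ) *
                Complex.exp (2 * Real.pi * Complex.I * (h a : ℂ) / (d : ℂ)) + (η : ℂ)‖ ^ n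
        ≤ C * Real.log n / Real.sqrt n :=
  statement6_general l i hi1 hil β η hβ0 hη0 hη
end

section
/- Let l ≥ 2 be an integer and ε > 0. There exists a constant C > 0 depending only on l and ε such that for all integers n ≥ 1: | ∑_{i=1}^{n} ∑ μ(d_1)μ(d_2)/(d_1 d_2)^{l−1} − n·∏_p (1 − 2/p^l) | ≤ C·n^ε, where the inner sum runs over pairs of positive integers (d_1, d_2) with d_1 d_2 ≤ i, d_1 ∣ i, d_2 ∣ i + 1 and gcd(d_1, d_2) = 1, and the product runs over all primes p. -/
/-!
Swapping the order of summation, the pair `(d₁, d₂)` (coprime, `d₁ d₂ ≤ n`) is counted once for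
every `i ≤ n` with `d₁ ∣ i`, `d₂ ∣ i + 1` and `d₁ d₂ ≤ i`. By the Chinese remainder theorem these
`i` form one residue class modulo `d₁ d₂`, so there are `n / (d₁ d₂) + O(1)` of them. Grouping the
pairs by `m = d₁ d₂`, the main term becomes `n ∑_{m ≤ n} μ(m) τ(m) / m^l`: for coprime `d₁ d₂ = m`
one has `μ(d₁) μ(d₂) = μ(m)`, and there are `τ(m)` such pairs when `m` is squarefree. The full
series is the Euler product `∏_p (1 - 2 / p^l)`. The `O(1)` errors contribute
`∑_{m ≤ n} τ(m) / m^(l-1)` and the tail of the series `n ∑_{m > n} τ(m) / m^l`; Rankin's trick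
bounds both by `n^δ ∑_m τ(m) / m^(l-1+δ)` with `δ = min ε 1`, and this series converges.
-/

open Finset ArithmeticFunction
open scoped ArithmeticFunction.Moebius ArithmeticFunction.sigma

def hyperbola (N : ℕ) : Finset (ℕ × ℕ) := (range (N + 1)).biUnion Nat.divisorsAntidiagonal

lemma mem_hyperbola {N : ℕ} {x : ℕ × ℕ} : x ∈ hyperbola N ↔ x.1 * x.2 ≠ 0 ∧ x.1 * x.2 ≤ N := by
  simp [hyperbola, and_comm]

lemma hyperbola_subset (N : ℕ) : hyperbola N ⊆ range (N + 1) ×ˢ range (N + 1) := fun x hx => by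
  obtain ⟨h₀, hN⟩ := mem_hyperbola.1 hx
  have h₁ := Nat.pos_of_ne_zero (left_ne_zero_of_mul h₀)
  have h₂ := Nat.pos_of_ne_zero (right_ne_zero_of_mul h₀)
  simp only [mem_product, mem_range]
  constructor <;> nlinarith

lemma sum_hyperbola {M : Type*} [AddCommMonoid M] (N : ℕ) (f : ℕ × ℕ → M) :
    ∑ x ∈ hyperbola N, f x = ∑ m ∈ range (N + 1), ∑ x ∈ m.divisorsAntidiagonal, f x :=
  sum_biUnion fun _ _ _ _ hab => disjoint_left.2 fun _ ha hb =>
    hab ((Nat.mem_divisorsAntidiagonal.1 ha).1.symm.trans (Nat.mem_divisorsAntidiagonal.1 hb).1)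

lemma sum_hyperbola_apply_mul {M : Type*} [AddCommMonoid M] (N : ℕ) (f : ℕ → M) :
    ∑ x ∈ hyperbola N, f (x.1 * x.2) = ∑ m ∈ range (N + 1), #m.divisors • f m := by
  rw [sum_hyperbola]
  refine sum_congr rfl fun m _ => ?_
  rw [sum_congr rfl fun x hx => by rw [(Nat.mem_divisorsAntidiagonal.1 hx).1], sum_const,
    ← Nat.map_div_right_divisors, card_map]

lemma sum_hyperbola_le_sq {φ : ℕ → ℝ} (hφ : ∀ d, 0 ≤ φ d) (N : ℕ) :
    ∑ x ∈ hyperbola N, φ x.1 * φ x.2 ≤ (∑ d ∈ range (N + 1), φ d) ^ 2 := by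
  rw [sq, sum_mul_sum, ← sum_product']
  exact sum_le_sum_of_subset_of_nonneg (hyperbola_subset N) fun x _ _ =>
    mul_nonneg (hφ _) (hφ _)

lemma summable_card_divisors_div_rpow {s : ℝ} (hs : 1 < s) :
    Summable fun m : ℕ => (#m.divisors : ℝ) / (m : ℝ) ^ s := by
  have hζ : Summable fun d : ℕ => 1 / (d : ℝ) ^ s := Real.summable_one_div_nat_rpow.2 hs
  refine summable_of_sum_range_le (c := (∑' d : ℕ, 1 / (d : ℝ) ^ s) ^ 2)
    (fun m => by positivity) fun N => ?_
  calc ∑ m ∈ range N, (#m.divisors : ℝ) / (m : ℝ) ^ s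
      ≤ ∑ m ∈ range (N + 1), (#m.divisors : ℝ) / (m : ℝ) ^ s :=
        sum_le_sum_of_subset_of_nonneg (range_subset_range.2 N.le_succ) fun _ _ _ => by
          positivity
    _ = ∑ x ∈ hyperbola N, 1 / ((x.1 * x.2 : ℕ) : ℝ) ^ s := by
        simp only [sum_hyperbola_apply_mul N fun m => 1 / (m : ℝ) ^ s, nsmul_eq_mul, mul_one_div]
    _ = ∑ x ∈ hyperbola N, 1 / (x.1 : ℝ) ^ s * (1 / (x.2 : ℝ) ^ s) :=
        sum_congr rfl fun x _ => by
          rw [Nat.cast_mul, Real.mul_rpow (by positivity) (by positivity), one_div_mul_one_div]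
    _ ≤ (∑ d ∈ range (N + 1), 1 / (d : ℝ) ^ s) ^ 2 :=
        sum_hyperbola_le_sq (φ := fun d => 1 / (d : ℝ) ^ s) (fun _ => by positivity) N
    _ ≤ (∑' d : ℕ, 1 / (d : ℝ) ^ s) ^ 2 := by
        gcongr
        exact hζ.sum_le_tsum _ fun _ _ => by positivity

lemma summable_card_divisors_div_rpow_sub_one_add {l : ℕ} (hl : 2 ≤ l) {δ : ℝ} (hδ : 0 < δ) :
    Summable fun m : ℕ => (#m.divisors : ℝ) / (m : ℝ) ^ (((l - 1 : ℕ) : ℝ) + δ) := by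
  have : (1 : ℝ) ≤ (l - 1 : ℕ) := by exact_mod_cast (by omega : 1 ≤ l - 1)
  exact summable_card_divisors_div_rpow (by linarith)

lemma one_div_pow_le_rpow_div_rpow {x y δ : ℝ} (k : ℕ) (hx : 0 < x) (hxy : x ≤ y)
    (hδ : 0 ≤ δ) : 1 / x ^ k ≤ y ^ δ / x ^ ((k : ℝ) + δ) := by
  rw [Real.rpow_add hx, Real.rpow_natCast, div_le_div_iff₀ (by positivity) (by positivity),
    one_mul, mul_comm]
  gcongr

lemma div_pow_succ_le_rpow_div_rpow {x y δ : ℝ} (k : ℕ) (hy : 0 < y) (hyx : y ≤ x)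
    (hδ : δ ≤ 1) : y / x ^ (k + 1) ≤ y ^ δ / x ^ ((k : ℝ) + δ) := by
  have hx : 0 < x := hy.trans_le hyx
  have hy' : y = y ^ δ * y ^ (1 - δ) := by rw [← Real.rpow_add hy]; simp
  have hx' : x ^ (k + 1) = x ^ ((k : ℝ) + δ) * x ^ (1 - δ) := by
    rw [← Real.rpow_add hx, ← Real.rpow_natCast]
    push_cast
    ring_nf
  calc y / x ^ (k + 1) = y ^ δ * y ^ (1 - δ) / (x ^ ((k : ℝ) + δ) * x ^ (1 - δ)) := by
        rw [← hy', hx']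
    _ ≤ y ^ δ * x ^ (1 - δ) / (x ^ ((k : ℝ) + δ) * x ^ (1 - δ)) := by gcongr
    _ = y ^ δ / x ^ ((k : ℝ) + δ) := mul_div_mul_right _ _ (by positivity)

lemma sum_range_card_divisors_div_pow_le (k n : ℕ) {δ : ℝ} (hδ : 0 ≤ δ) :
    ∑ m ∈ range (n + 1), (#m.divisors : ℝ) / (m : ℝ) ^ k
      ≤ n ^ δ * ∑ m ∈ range (n + 1), (#m.divisors : ℝ) / (m : ℝ) ^ ((k : ℝ) + δ) := by
  rw [mul_sum]
  refine sum_le_sum fun m hm => ?_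
  rcases Nat.eq_zero_or_pos m with rfl | hm₀
  · simp
  calc (#m.divisors : ℝ) / (m : ℝ) ^ k = #m.divisors * (1 / (m : ℝ) ^ k) :=
        (mul_one_div _ _).symm
    _ ≤ #m.divisors * (n ^ δ / (m : ℝ) ^ ((k : ℝ) + δ)) :=
        mul_le_mul_of_nonneg_left (one_div_pow_le_rpow_div_rpow k (by exact_mod_cast hm₀)
          (by exact_mod_cast Nat.lt_succ_iff.1 (mem_range.1 hm)) hδ) (Nat.cast_nonneg _)
    _ = n ^ δ * (#m.divisors / (m : ℝ) ^ ((k : ℝ) + δ)) := by ring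

lemma exists_modEq_iff_dvd_and_dvd_add_one {a b : ℕ} (hab : a.Coprime b) (hb : 0 < b) :
    ∃ r, ∀ i, a ∣ i ∧ b ∣ i + 1 ↔ i ≡ r [MOD a * b] := by
  obtain ⟨r, hra, hrb⟩ := Nat.chineseRemainder hab 0 (b - 1)
  refine ⟨r, fun i => ?_⟩
  rw [← Nat.modEq_and_modEq_iff_modEq_mul hab, ← Nat.modEq_zero_iff_dvd,
    ← Nat.modEq_zero_iff_dvd]
  have hb₁ : b - 1 + 1 ≡ 0 [MOD b] := by
    rw [Nat.sub_add_cancel hb]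
    exact Nat.modEq_zero_iff_dvd.2 dvd_rfl
  exact and_congr ⟨fun h => h.trans hra.symm, fun h => h.trans hra⟩
    ⟨fun h => (Nat.ModEq.add_right_cancel' 1 (h.trans hb₁.symm)).trans hrb.symm,
      fun h => ((h.trans hrb).add_right 1).trans hb₁⟩

lemma abs_card_filter_modEq_Ico_sub_le {a b r : ℕ} (hab : a ≤ b) (hr : 0 < r) (v : ℕ) :
    |(#{x ∈ Ico a b | x ≡ v [MOD r]} : ℝ) - ((b : ℝ) - a) / r| ≤ 1 := by
  have hceil : ⌈((a : ℚ) - v) / r⌉ ≤ ⌈((b : ℚ) - v) / r⌉ := by gcongr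
  have hcard : (#{x ∈ Ico a b | x ≡ v [MOD r]} : ℤ)
      = ⌈((b : ℚ) - v) / r⌉ - ⌈((a : ℚ) - v) / r⌉ := by
    rw [Nat.Ico_filter_modEq_card a b hr v, max_eq_left (by omega)]
  have key : |(#{x ∈ Ico a b | x ≡ v [MOD r]} : ℚ) - ((b : ℚ) - a) / r| ≤ 1 := by
    have h₁ := Int.le_ceil (((b : ℚ) - v) / r)
    have h₂ := Int.ceil_lt_add_one (((b : ℚ) - v) / r)
    have h₃ := Int.le_ceil (((a : ℚ) - v) / r)
    have h₄ := Int.ceil_lt_add_one (((a : ℚ) - v) / r)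
    rw [← Int.cast_natCast, hcard, abs_le,
      show ((b : ℚ) - a) / r = ((b : ℚ) - v) / r - ((a : ℚ) - v) / r by ring]
    push_cast
    constructor <;> linarith
  have := (Rat.cast_le (K := ℝ)).2 key
  push_cast at this
  exact this

lemma abs_card_dvd_and_dvd_add_one_sub_le {a b n : ℕ} (hab : a.Coprime b) (h₀ : a * b ≠ 0)
    (hn : a * b ≤ n) :
    |(#{i ∈ Icc 1 n | a ∣ i ∧ b ∣ i + 1 ∧ a * b ≤ i} : ℝ) - n / ((a : ℝ) * b)| ≤ 2 := by
  obtain ⟨r, hr⟩ :=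
    exists_modEq_iff_dvd_and_dvd_add_one hab (Nat.pos_of_ne_zero (right_ne_zero_of_mul h₀))
  have hset : {i ∈ Icc 1 n | a ∣ i ∧ b ∣ i + 1 ∧ a * b ≤ i}
      = {i ∈ Ico (a * b) (n + 1) | i ≡ r [MOD a * b]} := by
    ext i
    simp only [mem_filter, mem_Icc, mem_Ico, ← hr]
    omega
  have hm : (1 : ℝ) ≤ (a : ℝ) * b := by exact_mod_cast Nat.one_le_iff_ne_zero.2 h₀
  have hcount := abs_card_filter_modEq_Ico_sub_le (a := a * b) (b := n + 1) (by omega)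
    (Nat.pos_of_ne_zero h₀) r
  push_cast at hcount
  have hshift : |((n + 1 : ℝ) - a * b) / (a * b) - n / (a * b)| ≤ 1 := by
    have hinv : 0 < 1 / ((a : ℝ) * b) ∧ 1 / ((a : ℝ) * b) ≤ 1 :=
      ⟨by positivity, div_le_one_of_le₀ hm (by positivity)⟩
    rw [← sub_div, show (n + 1 : ℝ) - a * b - n = 1 - a * b by ring, sub_div,
      div_self (by positivity), abs_le]
    constructor <;> linarith
  rw [hset]
  linarith [abs_sub_le (#{i ∈ Ico (a * b) (n + 1) | i ≡ r [MOD a * b]} : ℝ)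
    (((n + 1 : ℝ) - a * b) / (a * b)) (n / (a * b))]

noncomputable def moebiusSigmaDivPow (l : ℕ) : ArithmeticFunction ℝ :=
  ((μ : ArithmeticFunction ℝ).pmul (σ 0 : ArithmeticFunction ℝ)).pdiv
    (pow l : ArithmeticFunction ℝ)

lemma moebiusSigmaDivPow_apply (l m : ℕ) :
    moebiusSigmaDivPow l m = μ m * #m.divisors / (m : ℝ) ^ l := by
  rcases eq_or_ne m 0 with rfl | hm <;> simp [moebiusSigmaDivPow, sigma_zero_apply, *]

lemma isMultiplicative_moebiusSigmaDivPow (l : ℕ) : (moebiusSigmaDivPow l).IsMultiplicative :=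
  (isMultiplicative_moebius.intCast.pmul isMultiplicative_sigma.natCast).pdiv
    isMultiplicative_pow.natCast

lemma tsum_moebiusSigmaDivPow_prime_pow {l p : ℕ} (hp : p.Prime) :
    ∑' e, moebiusSigmaDivPow l (p ^ e) = 1 - 2 / (p : ℝ) ^ l := by
  rw [tsum_eq_sum (s := range 2) fun e he => ?_]
  · simp [sum_range_succ, moebiusSigmaDivPow_apply, moebius_apply_prime hp, hp.divisors,
      card_pair hp.one_lt.ne]
    ring
  · have he : 1 < e := by simpa using he
    rw [moebiusSigmaDivPow_apply, moebius_apply_prime_pow hp (by omega), if_neg (by omega)]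
    simp

lemma tprod_eq_tsum_moebiusSigmaDivPow {l : ℕ} (hsum : Summable (‖moebiusSigmaDivPow l ·‖)) :
    ∏' p : Nat.Primes, (1 - 2 / ((p : ℕ) : ℝ) ^ l) = ∑' m, moebiusSigmaDivPow l m := by
  rw [← (isMultiplicative_moebiusSigmaDivPow l).eulerProduct_tprod hsum]
  exact tprod_congr fun p => (tsum_moebiusSigmaDivPow_prime_pow p.2).symm

lemma abs_moebiusSigmaDivPow_le (l m : ℕ) :
    |moebiusSigmaDivPow l m| ≤ (#m.divisors : ℝ) / (m : ℝ) ^ l := by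
  rw [moebiusSigmaDivPow_apply, abs_div, abs_mul, Nat.abs_cast, abs_pow, Nat.abs_cast]
  gcongr
  exact mul_le_of_le_one_left (Nat.cast_nonneg _) (by exact_mod_cast abs_moebius_le_one)

lemma summable_norm_moebiusSigmaDivPow {l : ℕ} (hl : 2 ≤ l) :
    Summable (‖moebiusSigmaDivPow l ·‖) := by
  have := summable_card_divisors_div_rpow (s := l) (by exact_mod_cast hl)
  simp only [Real.rpow_natCast] at this
  exact .of_nonneg_of_le (fun _ => norm_nonneg _) (abs_moebiusSigmaDivPow_le l) this

def coprimeMoebius (x : ℕ × ℕ) : ℤ := if Nat.gcd x.1 x.2 = 1 then μ x.1 * μ x.2 else 0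

lemma abs_coprimeMoebius_le_one (x : ℕ × ℕ) : |coprimeMoebius x| ≤ 1 := by
  unfold coprimeMoebius
  split_ifs
  · rw [abs_mul]
    exact mul_le_one₀ abs_moebius_le_one (abs_nonneg _) abs_moebius_le_one
  · simp

lemma sum_divisorsAntidiagonal_coprimeMoebius (m : ℕ) :
    ∑ x ∈ m.divisorsAntidiagonal, coprimeMoebius x = μ m * #m.divisors := by
  have h : ∀ x ∈ m.divisorsAntidiagonal,
      coprimeMoebius x = if Nat.gcd x.1 x.2 = 1 then μ m else 0 := fun x hx => by
    rw [coprimeMoebius, ← (Nat.mem_divisorsAntidiagonal.1 hx).1]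
    split_ifs with hc
    exacts [(isMultiplicative_moebius.map_mul_of_coprime hc).symm, rfl]
  rw [sum_congr rfl h, sum_ite, sum_const_zero, add_zero, sum_const, nsmul_eq_mul, mul_comm]
  by_cases hm : Squarefree m
  · rw [filter_true_of_mem fun x hx => ?_, ← Nat.map_div_right_divisors, card_map]
    rw [← (Nat.mem_divisorsAntidiagonal.1 hx).1] at hm
    exact (Nat.squarefree_mul_iff.1 hm).1
  · simp [moebius_eq_zero_of_not_squarefree hm]

lemma sum_range_moebiusSigmaDivPow_eq (l N : ℕ) :
    ∑ m ∈ range (N + 1), moebiusSigmaDivPow l m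
      = ∑ x ∈ hyperbola N, (coprimeMoebius x : ℝ) / ((x.1 : ℝ) * x.2) ^ l := by
  rw [sum_hyperbola]
  refine sum_congr rfl fun m _ => ?_
  rw [moebiusSigmaDivPow_apply, sum_congr rfl fun x hx => by
    rw [← Nat.cast_mul, (Nat.mem_divisorsAntidiagonal.1 hx).1], ← sum_div, ← Int.cast_sum,
    sum_divisorsAntidiagonal_coprimeMoebius]
  push_cast
  rfl

noncomputable def consecutiveDivisorSum (l n : ℕ) : ℝ :=
  ∑ i ∈ Icc 1 n, ∑ d₁ ∈ i.divisors, ∑ d₂ ∈ (i + 1).divisors,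
    if d₁ * d₂ ≤ i ∧ Nat.gcd d₁ d₂ = 1 then
      ((μ d₁ * μ d₂ : ℤ) : ℝ) / ((d₁ : ℝ) * (d₂ : ℝ)) ^ (l - 1)
    else 0

lemma sum_Icc_sum_divisors_eq_sum_hyperbola {M : Type*} [AddCommMonoid M] (n : ℕ)
    (F : ℕ × ℕ → M) :
    ∑ i ∈ Icc 1 n, ∑ d₁ ∈ i.divisors, ∑ d₂ ∈ (i + 1).divisors,
        (if d₁ * d₂ ≤ i then F (d₁, d₂) else 0)
      = ∑ x ∈ hyperbola n, #{i ∈ Icc 1 n | x.1 ∣ i ∧ x.2 ∣ i + 1 ∧ x.1 * x.2 ≤ i} • F x := by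
  simp_rw [← sum_const, sum_filter]
  rw [sum_comm]
  refine sum_congr rfl fun i hi => ?_
  rw [← sum_product', ← sum_filter, ← sum_filter]
  refine sum_congr ?_ fun _ _ => rfl
  ext x
  simp only [mem_filter, mem_product, Nat.mem_divisors, mem_hyperbola, mem_Icc] at hi ⊢
  constructor
  · rintro ⟨⟨⟨h₁, hi₀⟩, h₂, -⟩, hle⟩
    exact ⟨⟨mul_ne_zero (ne_zero_of_dvd_ne_zero hi₀ h₁)
      (ne_zero_of_dvd_ne_zero i.succ_ne_zero h₂), hle.trans hi.2⟩, h₁, h₂, hle⟩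
  · rintro ⟨-, h₁, h₂, hle⟩
    exact ⟨⟨⟨h₁, by omega⟩, h₂, by omega⟩, hle⟩

lemma consecutiveDivisorSum_eq (l n : ℕ) :
    consecutiveDivisorSum l n = ∑ x ∈ hyperbola n,
      (#{i ∈ Icc 1 n | x.1 ∣ i ∧ x.2 ∣ i + 1 ∧ x.1 * x.2 ≤ i} : ℝ)
        * (coprimeMoebius x / ((x.1 : ℝ) * x.2) ^ (l - 1)) := by
  have hterm (i d₁ d₂ : ℕ) :
      (if d₁ * d₂ ≤ i ∧ Nat.gcd d₁ d₂ = 1 then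
        ((μ d₁ * μ d₂ : ℤ) : ℝ) / ((d₁ : ℝ) * (d₂ : ℝ)) ^ (l - 1) else 0)
      = if d₁ * d₂ ≤ i then (coprimeMoebius (d₁, d₂) : ℝ) / ((d₁ : ℝ) * d₂) ^ (l - 1)
        else 0 := by
    unfold coprimeMoebius
    split_ifs <;> simp_all
  simp only [consecutiveDivisorSum, hterm]
  rw [sum_Icc_sum_divisors_eq_sum_hyperbola n
    fun x => (coprimeMoebius x : ℝ) / ((x.1 : ℝ) * x.2) ^ (l - 1)]
  simp only [nsmul_eq_mul]

lemma abs_card_mul_sub_le {l n : ℕ} (hl : l ≠ 0) {x : ℕ × ℕ} (hx : x ∈ hyperbola n) :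
    |(#{i ∈ Icc 1 n | x.1 ∣ i ∧ x.2 ∣ i + 1 ∧ x.1 * x.2 ≤ i} : ℝ)
        * (coprimeMoebius x / ((x.1 : ℝ) * x.2) ^ (l - 1))
      - n * (coprimeMoebius x / ((x.1 : ℝ) * x.2) ^ l)|
      ≤ 2 / ((x.1 : ℝ) * x.2) ^ (l - 1) := by
  obtain ⟨h₀, hn⟩ := mem_hyperbola.1 hx
  have hM : (0 : ℝ) < (x.1 : ℝ) * x.2 := by exact_mod_cast Nat.pos_of_ne_zero h₀
  by_cases hcop : Nat.gcd x.1 x.2 = 1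
  · set A : ℝ := ((#{i ∈ Icc 1 n | x.1 ∣ i ∧ x.2 ∣ i + 1 ∧ x.1 * x.2 ≤ i} : ℕ) : ℝ)
    have hc : |(coprimeMoebius x : ℝ)| ≤ 1 := by exact_mod_cast abs_coprimeMoebius_le_one x
    have hsplit : A * (coprimeMoebius x / ((x.1 : ℝ) * x.2) ^ (l - 1))
          - n * (coprimeMoebius x / ((x.1 : ℝ) * x.2) ^ l)
        = coprimeMoebius x / ((x.1 : ℝ) * x.2) ^ (l - 1) * (A - n / ((x.1 : ℝ) * x.2)) := by
      rw [← pow_sub_one_mul hl]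
      field_simp
    rw [hsplit, abs_mul, abs_div, abs_of_pos (pow_pos hM _), div_mul_eq_mul_div]
    gcongr
    exact (mul_le_mul hc (abs_card_dvd_and_dvd_add_one_sub_le hcop h₀ hn) (abs_nonneg _)
      zero_le_one).trans_eq (one_mul 2)
  · simp only [coprimeMoebius, hcop, if_false, Int.cast_zero, zero_div, mul_zero, sub_zero,
      abs_zero]
    positivity

lemma abs_consecutiveDivisorSum_sub_le {l : ℕ} (hl : l ≠ 0) (n : ℕ) :
    |consecutiveDivisorSum l n - n * ∑ m ∈ range (n + 1), moebiusSigmaDivPow l m|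
      ≤ 2 * ∑ m ∈ range (n + 1), (#m.divisors : ℝ) / (m : ℝ) ^ (l - 1) := by
  rw [consecutiveDivisorSum_eq, sum_range_moebiusSigmaDivPow_eq, mul_sum, ← sum_sub_distrib]
  refine (abs_sum_le_sum_abs _ _).trans
    ((sum_le_sum fun x hx => abs_card_mul_sub_le hl hx).trans_eq ?_)
  have := sum_hyperbola_apply_mul n fun m => 2 / (m : ℝ) ^ (l - 1)
  push_cast at this
  rw [this, mul_sum]
  exact sum_congr rfl fun m _ => by rw [nsmul_eq_mul]; ring

lemma mul_abs_tsum_sub_sum_range_le {l : ℕ} (hl : 2 ≤ l) {δ : ℝ} (hδ₀ : 0 < δ) (hδ₁ : δ ≤ 1)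
    (n : ℕ) :
    n * |∑' m, moebiusSigmaDivPow l m - ∑ m ∈ range (n + 1), moebiusSigmaDivPow l m|
      ≤ n ^ δ * ∑' k, (#(k + (n + 1)).divisors : ℝ)
          / ((k + (n + 1) : ℕ) : ℝ) ^ (((l - 1 : ℕ) : ℝ) + δ) := by
  have hb := summable_card_divisors_div_rpow_sub_one_add hl hδ₀
  rw [← (summable_norm_moebiusSigmaDivPow hl).of_norm.sum_add_tsum_nat_add (n + 1),
    add_sub_cancel_left, ← abs_of_nonneg (Nat.cast_nonneg (α := ℝ) n), ← abs_mul,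
    ← tsum_mul_left, ← tsum_mul_left]
  refine tsum_of_norm_bounded (E := ℝ)
    ((hb.comp_injective (add_left_injective (n + 1))).mul_left _).hasSum fun k => ?_
  rcases Nat.eq_zero_or_pos n with rfl | hn
  · simp [Real.zero_rpow hδ₀.ne']
  set m := k + (n + 1)
  rw [Real.norm_eq_abs, abs_mul, abs_of_nonneg (Nat.cast_nonneg _)]
  calc (n : ℝ) * |moebiusSigmaDivPow l m| ≤ n * ((#m.divisors : ℝ) / (m : ℝ) ^ l) := by
        gcongr
        exact abs_moebiusSigmaDivPow_le l m
    _ = #m.divisors * (n / (m : ℝ) ^ (l - 1 + 1)) := by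
        rw [Nat.sub_add_cancel (by omega)]
        ring
    _ ≤ #m.divisors * (n ^ δ / (m : ℝ) ^ (((l - 1 : ℕ) : ℝ) + δ)) :=
        mul_le_mul_of_nonneg_left (div_pow_succ_le_rpow_div_rpow _ (by exact_mod_cast hn)
          (by exact_mod_cast (by omega : n ≤ m)) hδ₁) (Nat.cast_nonneg _)
    _ = n ^ δ * (#m.divisors / (m : ℝ) ^ (((l - 1 : ℕ) : ℝ) + δ)) := by ring

theorem abs_consecutiveDivisorSum_sub_mul_tprod_le {l : ℕ} (hl : 2 ≤ l) {δ : ℝ} (hδ₀ : 0 < δ)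
    (hδ₁ : δ ≤ 1) (n : ℕ) :
    |consecutiveDivisorSum l n - n * ∏' p : Nat.Primes, (1 - 2 / ((p : ℕ) : ℝ) ^ l)|
      ≤ 2 * (∑' m : ℕ, (#m.divisors : ℝ) / (m : ℝ) ^ (((l - 1 : ℕ) : ℝ) + δ)) * n ^ δ := by
  rw [tprod_eq_tsum_moebiusSigmaDivPow (summable_norm_moebiusSigmaDivPow hl),
    ← (summable_card_divisors_div_rpow_sub_one_add hl hδ₀).sum_add_tsum_nat_add (n + 1)]
  set S := consecutiveDivisorSum l n
  set T := ∑ m ∈ range (n + 1), moebiusSigmaDivPow l m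
  set P := ∑' m, moebiusSigmaDivPow l m
  have hhead := (abs_consecutiveDivisorSum_sub_le (by omega : l ≠ 0) n).trans
    (mul_le_mul_of_nonneg_left (sum_range_card_divisors_div_pow_le (l - 1) n hδ₀.le)
      zero_le_two)
  have htail := mul_abs_tsum_sub_sum_range_le hl hδ₀ hδ₁ n
  have htail₀ : 0 ≤ ∑' k, (#(k + (n + 1)).divisors : ℝ)
      / ((k + (n + 1) : ℕ) : ℝ) ^ (((l - 1 : ℕ) : ℝ) + δ) := tsum_nonneg fun _ => by positivity
  calc |S - n * P| = |(S - n * T) - n * (P - T)| := by ring_nf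
    _ ≤ |S - n * T| + n * |P - T| := (abs_sub _ _).trans_eq (by rw [abs_mul, Nat.abs_cast])
    _ ≤ _ := by nlinarith [Real.rpow_nonneg (Nat.cast_nonneg (α := ℝ) n) δ]

theorem statement9 (l : ℕ) (hl : 2 ≤ l) (ε : ℝ) (hε : 0 < ε) :
    ∃ C : ℝ, 0 < C ∧ ∀ n : ℕ, 1 ≤ n →
      |(∑ i ∈ Finset.Icc 1 n, ∑ d₁ ∈ i.divisors, ∑ d₂ ∈ (i + 1).divisors,
          if d₁ * d₂ ≤ i ∧ Nat.gcd d₁ d₂ = 1 then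
            ((ArithmeticFunction.moebius d₁ * ArithmeticFunction.moebius d₂ : ℤ) : ℝ)
              / ((d₁ : ℝ) * (d₂ : ℝ)) ^ (l - 1)
          else 0)
        - (n : ℝ) * ∏' p : Nat.Primes, (1 - 2 / ((p : ℕ) : ℝ) ^ l)|
      ≤ C * (n : ℝ) ^ ε := by
  set D := ∑' m : ℕ, (#m.divisors : ℝ) / (m : ℝ) ^ (((l - 1 : ℕ) : ℝ) + min ε 1)
  have hD : 0 ≤ D := tsum_nonneg fun _ => by positivity
  refine ⟨2 * D + 1, by positivity, fun n hn => ?_⟩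
  calc _ ≤ 2 * D * n ^ min ε 1 :=
        abs_consecutiveDivisorSum_sub_mul_tprod_le hl (lt_min hε one_pos) (min_le_right _ _) n
    _ ≤ (2 * D + 1) * n ^ ε := by
        gcongr
        · linarith
        · exact_mod_cast hn
        · exact min_le_left _ _
end
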